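/- Let D ≥ 1 and let (ρ^N)_{N≥1}, ρ be probability measures on [0,1]^D with ‖ρ^N − ρ‖_E → 0 as N → ∞, where ρ is absolutely continuous with respect to Lebesgue measure with a bounded density. Let G : [0,1]^D → [0,∞) be continuous and bounded with ρ(G) = ∫ G dρ > 0. Then ρ^N(G) > 0 for all N large enough, and the self-normalized reweighted measures ν^N(dx) = G(x) ρ^N(dx) / ρ^N(G) converge in extreme norm to ν(dx) = G(x) ρ(dx) / ρ(G), i.e. ‖ν^N − ν‖_E → 0 as N → ∞. -/

import Mathlib

open MeasureTheory ProbabilityTheory Filter Set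
open scoped ENNReal NNReal

noncomputable section

/-- The closed unit cube `[0,1]^d` in `ℝ^d`. -/
def cubeIcc (d : ℕ) : Set (Fin d → ℝ) := Set.univ.pi fun _ => Set.Icc (0 : ℝ) 1

/-- The half-open unit cube `[0,1)^d` in `ℝ^d`. -/
def cubeIco (d : ℕ) : Set (Fin d → ℝ) := Set.univ.pi fun _ => Set.Ico (0 : ℝ) 1

/-- `IsGoodBox a b` : the box `∏ᵢ [aᵢ, bᵢ]` satisfies `0 ≤ aᵢ < bᵢ < 1` for all `i`. -/
def IsGoodBox {d : ℕ} (a b : Fin d → ℝ) : Prop := ∀ i, 0 ≤ a i ∧ a i < b i ∧ b i < 1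

/-- The closed box `∏ᵢ [aᵢ, bᵢ]` in `ℝ^d`. -/
def clBox {d : ℕ} (a b : Fin d → ℝ) : Set (Fin d → ℝ) :=
  Set.univ.pi fun i => Set.Icc (a i) (b i)

/-- The extreme norm distance `‖μ − ν‖_E` between two measures on `ℝ^d`:
the supremum over boxes `∏ᵢ [aᵢ, bᵢ]` with `0 ≤ aᵢ < bᵢ < 1` of `|μ(B) − ν(B)|`. -/
def extDist {d : ℕ} (μ ν : Measure (Fin d → ℝ)) : ℝ :=
  ⨆ p : {q : (Fin d → ℝ) × (Fin d → ℝ) // IsGoodBox q.1 q.2},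
    |(μ (clBox p.1.1 p.1.2)).toReal - (ν (clBox p.1.1 p.1.2)).toReal|

/-!
Extreme-norm convergence controls every closed box in `[0,1)^D`, degenerate ones included, and,
because `ρ` has a bounded density, every set squeezed between `∏ [eᵢ, fᵢ)` and `∏ [eᵢ, fᵢ]`:
the shells between such boxes have small `ρ`-mass. Cutting a box along the grid of mesh `1/n`
into such pieces and freezing `G` (extended off the cube by Tietze) at a corner of each piece
gives `∫_B G dρ^N → ∫_B G dρ` uniformly in the box `B`. Outside `[0, 1 - γ]^D` both `ρ` and,
by extreme-norm convergence, `ρ^N` have small mass, so also `ρ^N(G) → ρ(G) > 0`, and the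
reweighted box masses `∫_B G dρ^N / ρ^N(G)` converge uniformly.
-/

open Topology
open scoped BoundedContinuousFunction

namespace ReweightedExtreme

lemma le_of_eventually_le_add_mul {x y C : ℝ} (h : ∀ᶠ δ in 𝓝[>] (0 : ℝ), x ≤ y + C * δ) :
    x ≤ y := by
  refine ge_of_tendsto ?_ h
  have : Tendsto (fun δ : ℝ => y + C * δ) (𝓝 0) (𝓝 (y + C * 0)) :=
    (continuous_const.add (continuous_const.mul continuous_id)).tendsto 0
  simpa using this.mono_left nhdsWithin_le_nhds

lemma tendstoUniformly_div_of_tendsto {ι β : Type*} {l : Filter ι} {F : ι → β → ℝ}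
    {f : β → ℝ} {c : ι → ℝ} {c₀ K : ℝ} (hF : TendstoUniformly F f l)
    (hc : Tendsto c l (𝓝 c₀)) (hc₀ : c₀ ≠ 0) (hf : ∀ x, |f x| ≤ K) :
    TendstoUniformly (fun i x => F i x / c i) (fun x => f x / c₀) l := by
  rw [Metric.tendstoUniformly_iff] at hF ⊢
  intro ε hε
  have hc' : Tendsto (fun i => (c i)⁻¹) l (𝓝 c₀⁻¹) := hc.inv₀ hc₀
  set C := |c₀⁻¹| + 1
  have hC : 0 < C := by positivity
  have hK : 0 < |K| + 1 := by positivity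
  filter_upwards [hF (ε / (2 * C)) (by positivity),
    Metric.tendsto_nhds.1 hc' (ε / (2 * (|K| + 1))) (by positivity),
    hc'.abs.eventually (gt_mem_nhds (lt_add_one |c₀⁻¹|))] with i hFi hci hCi x
  have hfx : |f x| ≤ |K| + 1 := by linarith [hf x, le_abs_self K]
  rw [Real.dist_eq, abs_sub_comm] at hci
  calc dist (f x / c₀) (F i x / c i)
      = |f x * (c₀⁻¹ - (c i)⁻¹) + (f x - F i x) * (c i)⁻¹| := by
        rw [Real.dist_eq]; ring_nf
    _ ≤ (|K| + 1) * |c₀⁻¹ - (c i)⁻¹| + ε / (2 * C) * C := by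
        refine (abs_add_le _ _).trans (add_le_add ?_ ?_) <;> rw [abs_mul]
        · exact mul_le_mul_of_nonneg_right hfx (abs_nonneg _)
        · exact mul_le_mul (hFi x).le hCi.le (abs_nonneg _) (by positivity)
    _ < (|K| + 1) * (ε / (2 * (|K| + 1))) + ε / (2 * C) * C := by gcongr
    _ = ε := by field_simp; ring

lemma exists_boundedContinuous_eqOn {X : Type*} [TopologicalSpace X] [NormalSpace X]
    {s : Set X} (hs : IsClosed s) {G : X → ℝ} (hG : ContinuousOn G s) {a b : ℝ} (hab : a ≤ b)
    (hGab : ∀ x ∈ s, G x ∈ Icc a b) : ∃ g : X →ᵇ ℝ, (∀ x, g x ∈ Icc a b) ∧ EqOn g G s := by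
  let f : s →ᵇ ℝ := .mkOfBound ⟨s.domRestrict G, hG.domRestrict⟩ (b - a) fun x y =>
    Real.dist_le_of_mem_Icc (hGab x x.2) (hGab y y.2)
  obtain ⟨g, hg, hgf⟩ := f.exists_extension_forall_mem_Icc_of_isClosedEmbedding
    (fun x => hGab x x.2) hab hs.isClosedEmbedding_subtypeVal
  exact ⟨g, hg, fun x hx => congr_fun hgf ⟨x, hx⟩⟩

section Measures

variable {α : Type*} [MeasurableSpace α]

lemma measureReal_inv_smul_withDensity (μ : Measure α) {g : α → ℝ} (hg : Integrable g μ)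
    (hg₀ : 0 ≤ g) {s : Set α} (hs : MeasurableSet s) :
    ((ENNReal.ofReal (∫ x, g x ∂μ))⁻¹ • μ.withDensity fun x => ENNReal.ofReal (g x)).real s =
      (∫ x in s, g x ∂μ) / ∫ x, g x ∂μ := by
  rw [Measure.real, Measure.smul_apply, smul_eq_mul, withDensity_apply _ hs,
    ← ofReal_integral_eq_lintegral_ofReal hg.integrableOn (ae_of_all _ hg₀), ENNReal.toReal_mul,
    ENNReal.toReal_inv, ENNReal.toReal_ofReal (integral_nonneg hg₀),
    ENNReal.toReal_ofReal (setIntegral_nonneg hs fun x _ => hg₀ x), inv_mul_eq_div]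

lemma abs_integral_sub_setIntegral_le [TopologicalSpace α] [OpensMeasurableSpace α]
    (μ : Measure α) [IsFiniteMeasure μ] (g : α →ᵇ ℝ) {s : Set α} (hs : MeasurableSet s) :
    |∫ x, g x ∂μ - ∫ x in s, g x ∂μ| ≤ ‖g‖ * μ.real sᶜ := by
  rw [← integral_add_compl hs (g.integrable μ), add_sub_cancel_left]
  exact norm_setIntegral_le_of_norm_le_const (measure_lt_top _ _) fun x _ =>
    g.norm_coe_le_norm x

lemma abs_setIntegral_le_norm [TopologicalSpace α] [OpensMeasurableSpace α] (μ : Measure α)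
    [IsProbabilityMeasure μ] (g : α →ᵇ ℝ) (s : Set α) : |∫ x in s, g x ∂μ| ≤ ‖g‖ :=
  (norm_setIntegral_le_of_norm_le_const (measure_lt_top μ s) fun x _ => g.norm_coe_le_norm x).trans
    (mul_le_of_le_one_right (norm_nonneg g) measureReal_le_one)

lemma ae_eq_of_eqOn_of_measure_eq_one {β : Type*} {μ : Measure α} [IsProbabilityMeasure μ]
    {s : Set α} (hs : MeasurableSet s) (hμ : μ s = 1) {f g : α → β} (h : EqOn f g s) :
    f =ᵐ[μ] g :=
  h.eventuallyEq_of_mem (mem_ae_iff.2 ((prob_compl_eq_zero_iff hs).2 hμ))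

variable {μ ν : Measure α} [IsFiniteMeasure μ] [IsFiniteMeasure ν]

lemma abs_measureReal_sub_le_of_subset_of_subset {L S U : Set α} {E : ℝ} (hLS : L ⊆ S)
    (hSU : S ⊆ U) (hL : |μ.real L - ν.real L| ≤ E) (hU : |μ.real U - ν.real U| ≤ E) :
    |μ.real S - ν.real S| ≤ E + ν.real (U \ L) := by
  have hμL : μ.real L ≤ μ.real S := measureReal_mono hLS
  have hμU : μ.real S ≤ μ.real U := measureReal_mono hSU
  have hνU : ν.real U ≤ ν.real S + ν.real (U \ L) :=
    (measureReal_mono fun x hx => by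
      by_cases hxS : x ∈ S <;> simp [hx, hxS, mt (@hLS x)]).trans (measureReal_union_le _ _)
  have hνS : ν.real S ≤ ν.real L + ν.real (U \ L) :=
    (measureReal_mono fun x hx => by by_cases hxL : x ∈ L <;> simp [hSU hx, hxL]).trans
      (measureReal_union_le _ _)
  rw [abs_le] at hL hU ⊢
  constructor <;> linarith

variable {g : α → ℝ}

lemma abs_setIntegral_sub_mul_measureReal_le {S : Set α} (hg : IntegrableOn g S μ) {c ε : ℝ}
    (hgc : ∀ x ∈ S, |g x - c| ≤ ε) :
    |∫ x in S, g x ∂μ - c * μ.real S| ≤ ε * μ.real S := by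
  have : ∫ x in S, g x ∂μ - c * μ.real S = ∫ x in S, (g x - c) ∂μ := by
    rw [integral_sub hg (integrableOn_const (measure_ne_top μ S)), setIntegral_const,
      smul_eq_mul, mul_comm]
  rw [this]
  exact norm_setIntegral_le_of_norm_le_const (f := fun x => g x - c) (measure_lt_top μ S) hgc

lemma abs_setIntegral_iUnion_sub_le {ι : Type*} [Fintype ι] (hμ : Integrable g μ)
    (hν : Integrable g ν) {S : ι → Set α} (hS : ∀ k, MeasurableSet (S k))
    (hdisj : Pairwise (Function.onFun Disjoint S)) {c : ι → ℝ} {ε K E : ℝ}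
    (hgc : ∀ k, ∀ x ∈ S k, |g x - c k| ≤ ε) (hc : ∀ k, |c k| ≤ K)
    (hE : ∀ k, |μ.real (S k) - ν.real (S k)| ≤ E) :
    |∫ x in ⋃ k, S k, g x ∂μ - ∫ x in ⋃ k, S k, g x ∂ν| ≤
      ε * (μ.real (⋃ k, S k) + ν.real (⋃ k, S k)) + Fintype.card ι * (K * E) := by
  have hpiece (k : ι) : |∫ x in S k, g x ∂μ - ∫ x in S k, g x ∂ν| ≤
      ε * μ.real (S k) + ε * ν.real (S k) + K * E := by
    have hμk := abs_setIntegral_sub_mul_measureReal_le hμ.integrableOn (hgc k)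
    have hνk := abs_setIntegral_sub_mul_measureReal_le hν.integrableOn (hgc k)
    have hck : |c k * μ.real (S k) - c k * ν.real (S k)| ≤ K * E := by
      rw [← mul_sub, abs_mul]
      exact mul_le_mul (hc k) (hE k) (abs_nonneg _) ((abs_nonneg _).trans (hc k))
    rw [abs_le] at hμk hνk hck ⊢
    constructor <;> linarith
  rw [integral_iUnion_fintype hS hdisj fun k => hμ.integrableOn,
    integral_iUnion_fintype hS hdisj fun k => hν.integrableOn,
    measureReal_iUnion_fintype hdisj hS, measureReal_iUnion_fintype hdisj hS,
    ← Finset.sum_sub_distrib]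
  calc |∑ k, (∫ x in S k, g x ∂μ - ∫ x in S k, g x ∂ν)|
      ≤ ∑ k, (ε * μ.real (S k) + ε * ν.real (S k) + K * E) :=
        (Finset.abs_sum_le_sum_abs _ _).trans (Finset.sum_le_sum fun k _ => hpiece k)
    _ = _ := by
        simp only [Finset.sum_add_distrib, ← Finset.mul_sum, Finset.sum_const, Finset.card_univ,
          nsmul_eq_mul]
        ring

end Measures

variable {D : ℕ}

section Boxes

lemma mem_clBox {a b x : Fin D → ℝ} : x ∈ clBox a b ↔ ∀ i, a i ≤ x i ∧ x i ≤ b i := by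
  simp only [clBox, mem_univ_pi, mem_Icc]

lemma measurableSet_clBox (a b : Fin D → ℝ) : MeasurableSet (clBox a b) :=
  MeasurableSet.univ_pi fun _ => measurableSet_Icc

lemma measurableSet_cubeIcc : MeasurableSet (cubeIcc D) :=
  MeasurableSet.univ_pi fun _ => measurableSet_Icc

lemma isCompact_cubeIcc : IsCompact (cubeIcc D) :=
  isCompact_univ_pi fun _ => isCompact_Icc

lemma clBox_subset_cubeIco {a b : Fin D → ℝ} (hab : IsGoodBox a b) : clBox a b ⊆ cubeIco D :=
  pi_mono fun i _ _ hx => ⟨(hab i).1.trans hx.1, hx.2.trans_lt (hab i).2.2⟩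

lemma cubeIco_subset_cubeIcc : cubeIco D ⊆ cubeIcc D :=
  pi_mono fun _ _ => Ico_subset_Icc_self

lemma volume_clBox_le {e f : Fin D → ℝ} (i : Fin D) (hside : ∀ j ≠ i, f j - e j ≤ 1) :
    volume (clBox e f) ≤ ENNReal.ofReal (f i - e i) := by
  rw [clBox, pi_univ_Icc, Real.volume_Icc_pi, ← Finset.mul_prod_erase _ _ (Finset.mem_univ i)]
  refine mul_le_of_le_one_right' (Finset.prod_le_one' fun j hj => ?_)
  exact ENNReal.ofReal_le_one.2 (hside j (Finset.ne_of_mem_erase hj))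

lemma volume_clBox_diff_le {e f : Fin D → ℝ} (hside : ∀ j, f j - e j ≤ 1) (δ : ℝ) :
    volume (clBox e f \ clBox e (fun j => f j - δ)) ≤ D * ENNReal.ofReal δ := by
  have hsub : clBox e f \ clBox e (fun j => f j - δ) ⊆
      ⋃ i, clBox (Function.update e i (f i - δ)) f := by
    rintro x ⟨hx, hxδ⟩
    simp only [mem_clBox, not_forall] at hx hxδ
    obtain ⟨i, hi⟩ := hxδ
    refine mem_iUnion.2 ⟨i, mem_clBox.2 fun j => ?_⟩
    rcases eq_or_ne j i with rfl | hj
    · simp only [Function.update_self]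
      exact ⟨(not_le.1 fun h => hi ⟨(hx j).1, h⟩).le, (hx j).2⟩
    · simpa [Function.update_of_ne hj] using hx j
  have hslab (i : Fin D) :
      volume (clBox (Function.update e i (f i - δ)) f) ≤ ENNReal.ofReal δ := by
    simpa using volume_clBox_le (e := Function.update e i (f i - δ)) (f := f) i
      fun j hj => by simpa [Function.update_of_ne hj] using hside j
  calc volume (clBox e f \ clBox e (fun j => f j - δ))
      ≤ ∑ i, volume (clBox (Function.update e i (f i - δ)) f) :=
        (measure_mono hsub).trans (measure_iUnion_fintype_le _ _)
    _ ≤ ∑ _i : Fin D, ENNReal.ofReal δ := Finset.sum_le_sum fun i _ => hslab i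
    _ = D * ENNReal.ofReal δ := by simp

lemma measureReal_le_of_volume_le {ν : Measure (Fin D → ℝ)} {M : ℝ≥0∞} (hM : M ≠ ⊤)
    (hν : ν ≤ M • volume) {s : Set (Fin D → ℝ)} {c : ℝ} (hc : 0 ≤ c)
    (hs : volume s ≤ ENNReal.ofReal c) : ν.real s ≤ M.toReal * c := by
  have : ν s ≤ M * ENNReal.ofReal c := (hν s).trans (mul_le_mul_right hs M)
  simpa [Measure.real, ENNReal.toReal_mul, hc] using
    ENNReal.toReal_mono (ENNReal.mul_ne_top hM ENNReal.ofReal_ne_top) this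

end Boxes

section ExtDist

abbrev GoodBox (D : ℕ) := {q : (Fin D → ℝ) × (Fin D → ℝ) // IsGoodBox q.1 q.2}

instance : Nonempty (GoodBox D) :=
  ⟨⟨(fun _ => 0, fun _ => 1 / 2), fun _ => ⟨le_rfl, by norm_num, by norm_num⟩⟩⟩

lemma extDist_nonneg (μ ν : Measure (Fin D → ℝ)) : 0 ≤ extDist μ ν :=
  Real.iSup_nonneg fun _ => abs_nonneg _

lemma abs_measureReal_sub_le_extDist (μ ν : Measure (Fin D → ℝ)) [IsFiniteMeasure μ]
    [IsFiniteMeasure ν] {a b : Fin D → ℝ} (h : IsGoodBox a b) :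
    |μ.real (clBox a b) - ν.real (clBox a b)| ≤ extDist μ ν := by
  refine le_ciSup (f := fun p : GoodBox D =>
    |μ.real (clBox p.1.1 p.1.2) - ν.real (clBox p.1.1 p.1.2)|) ⟨μ.real univ + ν.real univ, ?_⟩
    ⟨(a, b), h⟩
  rintro _ ⟨p, rfl⟩
  have := measureReal_mono (μ := μ) (subset_univ (clBox p.1.1 p.1.2))
  have := measureReal_mono (μ := ν) (subset_univ (clBox p.1.1 p.1.2))
  rw [abs_sub_le_iff]
  constructor <;> linarith [measureReal_nonneg (μ := μ) (s := clBox p.1.1 p.1.2),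
    measureReal_nonneg (μ := ν) (s := clBox p.1.1 p.1.2)]

lemma tendsto_extDist_of_tendstoUniformly {ι : Type*} {l : Filter ι}
    {μ : ι → Measure (Fin D → ℝ)} {ν : Measure (Fin D → ℝ)}
    (h : TendstoUniformly (fun i (p : GoodBox D) => (μ i).real (clBox p.1.1 p.1.2))
      (fun p => ν.real (clBox p.1.1 p.1.2)) l) :
    Tendsto (fun i => extDist (μ i) ν) l (𝓝 0) := by
  refine Metric.tendsto_nhds.2 fun ε hε => ?_
  filter_upwards [Metric.tendstoUniformly_iff.1 h (ε / 2) (half_pos hε)] with i hi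
  have hle : extDist (μ i) ν ≤ ε / 2 :=
    ciSup_le fun p => by rw [abs_sub_comm]; exact (hi p).le
  rw [Real.dist_eq, sub_zero, abs_of_nonneg (extDist_nonneg _ _)]
  linarith

variable (μ ν : Measure (Fin D → ℝ)) [IsFiniteMeasure μ] [IsFiniteMeasure ν] {M : ℝ≥0∞}

lemma abs_measureReal_clBox_sub_le_extDist (hM : M ≠ ⊤) (hν : ν ≤ M • volume)
    {e f : Fin D → ℝ} (he : ∀ i, 0 ≤ e i) (hf : ∀ i, f i < 1) :
    |μ.real (clBox e f) - ν.real (clBox e f)| ≤ extDist μ ν := by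
  by_cases hgood : ∀ i, e i < f i
  · exact abs_measureReal_sub_le_extDist μ ν fun i => ⟨he i, hgood i, hf i⟩
  by_cases hempty : ∃ j, f j < e j
  · obtain ⟨j, hj⟩ := hempty
    have : clBox e f = ∅ := eq_empty_of_forall_notMem fun x hx =>
      (mem_clBox.1 hx j).1.trans (mem_clBox.1 hx j).2 |>.not_gt hj
    simp [this, extDist_nonneg]
  push Not at hgood hempty
  obtain ⟨i, hi⟩ := hgood
  -- A flat box: squeeze it between `∅` and the good boxes `clBox e (f + δ)` of volume `≤ δ`.
  refine le_of_eventually_le_add_mul (C := M.toReal) ?_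
  have hδ : ∀ᶠ δ in 𝓝[>] (0 : ℝ), 0 < δ ∧ ∀ j, f j + δ < 1 :=
    eventually_mem_nhdsWithin.and (eventually_all.2 fun j => nhdsWithin_le_nhds
      ((eventually_lt_nhds (sub_pos.2 (hf j))).mono fun δ h => by linarith))
  filter_upwards [hδ] with δ ⟨hδ, hδf⟩
  have hU := abs_measureReal_sub_le_extDist μ ν (a := e) (b := fun j => f j + δ)
    fun j => ⟨he j, by linarith [hempty j], hδf j⟩
  have hS := abs_measureReal_sub_le_of_subset_of_subset (empty_subset _)
    (fun x hx => mem_clBox.2 fun j =>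
      ⟨(mem_clBox.1 hx j).1, by linarith [(mem_clBox.1 hx j).2]⟩) (by simp [extDist_nonneg]) hU
  have hvol : ν.real (clBox e (fun j => f j + δ) \ ∅) ≤ M.toReal * δ := by
    refine measureReal_le_of_volume_le hM hν hδ.le ?_
    simpa [le_antisymm (hempty i) hi] using
      volume_clBox_le (e := e) (f := fun j => f j + δ) i fun j _ => by linarith [he j, hδf j]
  linarith

lemma abs_measureReal_sub_le_extDist_of_subset (hM : M ≠ ⊤) (hν : ν ≤ M • volume)
    {e f : Fin D → ℝ} (he : ∀ i, 0 ≤ e i) (hf : ∀ i, f i < 1) {S : Set (Fin D → ℝ)}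
    (hIco : univ.pi (fun i => Ico (e i) (f i)) ⊆ S) (hSU : S ⊆ clBox e f) :
    |μ.real S - ν.real S| ≤ extDist μ ν := by
  refine le_of_eventually_le_add_mul (C := M.toReal * D) ?_
  filter_upwards [eventually_mem_nhdsWithin] with δ (hδ : 0 < δ)
  have hLS : clBox e (fun j => f j - δ) ⊆ S := fun x hx => hIco <| mem_univ_pi.2 fun j =>
    ⟨(mem_clBox.1 hx j).1, by linarith [(mem_clBox.1 hx j).2]⟩
  have hS := abs_measureReal_sub_le_of_subset_of_subset hLS hSU
    (abs_measureReal_clBox_sub_le_extDist μ ν hM hν he fun j => by linarith [hf j])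
    (abs_measureReal_clBox_sub_le_extDist μ ν hM hν he hf)
  have hvol : ν.real (clBox e f \ clBox e (fun j => f j - δ)) ≤ M.toReal * (D * δ) := by
    refine measureReal_le_of_volume_le hM hν (by positivity) ?_
    rw [ENNReal.ofReal_mul (Nat.cast_nonneg D), ENNReal.ofReal_natCast]
    exact volume_clBox_diff_le (fun j => by linarith [he j, hf j]) δ
  linarith

end ExtDist

section Cells

def cell (n : ℕ) (k : Fin D → Fin n) : Set (Fin D → ℝ) :=
  univ.pi fun i => Ico ((k i : ℝ) / n) ((k i + 1 : ℝ) / n)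

variable {n : ℕ}

lemma measurableSet_cell (k : Fin D → Fin n) : MeasurableSet (cell n k) :=
  MeasurableSet.univ_pi fun _ => measurableSet_Ico

lemma div_le_and_lt_div_iff_floor {m : ℕ} {t : ℝ} (hn : 0 < n) :
    (m / n ≤ t ∧ t < (m + 1) / n) ↔ 0 ≤ t ∧ ⌊t * n⌋₊ = m := by
  have hn' : (0 : ℝ) < n := Nat.cast_pos.2 hn
  rw [div_le_iff₀ hn', lt_div_iff₀ hn']
  constructor
  · rintro ⟨h₁, h₂⟩
    have ht : 0 ≤ t := nonneg_of_mul_nonneg_left ((Nat.cast_nonneg m).trans h₁) hn'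
    exact ⟨ht, (Nat.floor_eq_iff (by positivity)).2 ⟨h₁, h₂⟩⟩
  · rintro ⟨ht, h⟩
    exact (Nat.floor_eq_iff (by positivity)).1 h

lemma mem_cell_iff (hn : 0 < n) {k : Fin D → Fin n} {x : Fin D → ℝ} :
    x ∈ cell n k ↔ ∀ i, 0 ≤ x i ∧ ⌊x i * n⌋₊ = k i := by
  simp only [cell, mem_univ_pi, mem_Ico, div_le_and_lt_div_iff_floor hn]

lemma pairwise_disjoint_cell (hn : 0 < n) :
    Pairwise (Function.onFun Disjoint (cell (D := D) n)) :=
  fun _ _ hkk' => disjoint_left.2 fun _ hx hx' => hkk' <| funext fun i => Fin.ext <|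
    ((mem_cell_iff hn).1 hx i).2.symm.trans ((mem_cell_iff hn).1 hx' i).2

lemma iUnion_cell (hn : 0 < n) : ⋃ k, cell (D := D) n k = cubeIco D := by
  have hn' : (0 : ℝ) < n := Nat.cast_pos.2 hn
  ext x
  simp only [mem_iUnion, cubeIco, mem_univ_pi, mem_Ico, mem_cell_iff hn]
  constructor
  · rintro ⟨k, hk⟩ i
    refine ⟨(hk i).1, ?_⟩
    have := (Nat.floor_eq_iff (by have := (hk i).1; positivity)).1 (hk i).2
    have hk' : ((k i : ℕ) : ℝ) + 1 ≤ n := by exact_mod_cast (k i).2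
    nlinarith
  · intro hx
    refine ⟨fun i => ⟨⌊x i * n⌋₊, ?_⟩, fun i => ⟨(hx i).1, rfl⟩⟩
    rw [Nat.floor_lt (mul_nonneg (hx i).1 hn'.le)]
    nlinarith [(hx i).2]

lemma dist_lt_of_mem_cell (hn : 0 < n) {k : Fin D → Fin n} {x : Fin D → ℝ}
    (hx : x ∈ cell n k) : dist x (fun i => (k i : ℝ) / n) < 1 / n := by
  refine (dist_pi_lt_iff (by positivity)).2 fun i => ?_
  have := mem_univ_pi.1 hx i
  rw [mem_Ico, add_div] at this
  rw [Real.dist_eq, abs_lt]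
  constructor <;> linarith [this.1, this.2, (by positivity : (0 : ℝ) < 1 / n)]

lemma corner_mem_cubeIcc (k : Fin D → Fin n) : (fun i => (k i : ℝ) / n) ∈ cubeIcc D :=
  mem_univ_pi.2 fun i => ⟨by positivity, div_le_one_of_le₀ (by exact_mod_cast (k i).2.le)
    (Nat.cast_nonneg n)⟩

lemma pi_Ico_subset_clBox_inter_cell (a b : Fin D → ℝ) (k : Fin D → Fin n) :
    univ.pi (fun i => Ico (max (a i) (k i / n)) (min (b i) ((k i + 1) / n))) ⊆
      clBox a b ∩ cell n k := by
  intro x hx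
  simp only [clBox, cell, mem_inter_iff, mem_univ_pi, mem_Icc, mem_Ico, max_le_iff,
    lt_min_iff] at hx ⊢
  exact ⟨fun i => ⟨(hx i).1.1, (hx i).2.1.le⟩, fun i => ⟨(hx i).1.2, (hx i).2.2⟩⟩

lemma clBox_inter_cell_subset (a b : Fin D → ℝ) (k : Fin D → Fin n) :
    clBox a b ∩ cell n k ⊆
      clBox (fun i => max (a i) (k i / n)) (fun i => min (b i) ((k i + 1) / n)) := by
  intro x hx
  simp only [clBox, cell, mem_inter_iff, mem_univ_pi, mem_Icc, mem_Ico, max_le_iff,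
    le_min_iff] at hx ⊢
  exact fun i => ⟨⟨(hx.1 i).1, (hx.2 i).1⟩, (hx.1 i).2, (hx.2 i).2.le⟩

end Cells

section FixedMeasures

variable (μ ν : Measure (Fin D → ℝ)) [IsProbabilityMeasure μ] [IsProbabilityMeasure ν]
  {M : ℝ≥0∞} (g : (Fin D → ℝ) →ᵇ ℝ)

lemma abs_setIntegral_clBox_sub_le (hM : M ≠ ⊤) (hν : ν ≤ M • volume) {n : ℕ} (hn : 0 < n)
    {ε : ℝ} (hg : ∀ x ∈ cubeIcc D, ∀ y ∈ cubeIcc D, dist x y < 1 / n → dist (g x) (g y) < ε)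
    {a b : Fin D → ℝ} (hab : IsGoodBox a b) :
    |∫ x in clBox a b, g x ∂μ - ∫ x in clBox a b, g x ∂ν| ≤
      2 * ε + n ^ D * (‖g‖ * extDist μ ν) := by
  have hB : ⋃ k, clBox a b ∩ cell n k = clBox a b := by
    rw [← inter_iUnion, iUnion_cell hn, inter_eq_left.2 (clBox_subset_cubeIco hab)]
  have hε : 0 < ε := by
    have h0 := corner_mem_cubeIcc (D := D) (fun _ => (⟨0, hn⟩ : Fin n))
    simpa using hg _ h0 _ h0 (by simpa using hn)
  have key := abs_setIntegral_iUnion_sub_le (g.integrable μ) (g.integrable ν)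
    (fun k => (measurableSet_clBox a b).inter (measurableSet_cell k))
    (fun _ _ h => (pairwise_disjoint_cell hn h).mono inter_subset_right inter_subset_right)
    (c := fun k => g fun i => (k i : ℝ) / n) (K := ‖g‖)
    (fun k x hx => (hg x (cubeIco_subset_cubeIcc (clBox_subset_cubeIco hab hx.1)) _
      (corner_mem_cubeIcc k) (dist_lt_of_mem_cell hn hx.2)).le)
    (fun k => g.norm_coe_le_norm _)
    (fun k => abs_measureReal_sub_le_extDist_of_subset μ ν hM hν
      (fun i => le_max_of_le_left (hab i).1) (fun i => min_lt_of_left_lt (hab i).2.2)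
      (pi_Ico_subset_clBox_inter_cell a b k) (clBox_inter_cell_subset a b k))
  rw [hB, Fintype.card_fun, Fintype.card_fin, Fintype.card_fin, Nat.cast_pow] at key
  have hμB : μ.real (clBox a b) ≤ 1 := measureReal_le_one
  have hνB : ν.real (clBox a b) ≤ 1 := measureReal_le_one
  have hmass : ε * (μ.real (clBox a b) + ν.real (clBox a b)) ≤ ε * 2 :=
    mul_le_mul_of_nonneg_left (by linarith) hε.le
  linarith

lemma abs_integral_sub_le_of_isGoodBox {a b : Fin D → ℝ} (hab : IsGoodBox a b) :
    |∫ x, g x ∂μ - ∫ x, g x ∂ν| ≤ |∫ x in clBox a b, g x ∂μ - ∫ x in clBox a b, g x ∂ν| +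
      ‖g‖ * (2 * ν.real (clBox a b)ᶜ + extDist μ ν) := by
  have hB := measurableSet_clBox a b
  have hμ := abs_integral_sub_setIntegral_le μ g hB
  have hν := abs_integral_sub_setIntegral_le ν g hB
  have hcompl : μ.real (clBox a b)ᶜ ≤ ν.real (clBox a b)ᶜ + extDist μ ν := by
    rw [probReal_compl_eq_one_sub hB, probReal_compl_eq_one_sub hB]
    linarith [(abs_le.1 (abs_measureReal_sub_le_extDist μ ν hab)).1]
  have := mul_le_mul_of_nonneg_left hcompl (norm_nonneg g)
  set A := ∫ x in clBox a b, g x ∂μ - ∫ x in clBox a b, g x ∂ν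
  rw [abs_le] at hμ hν ⊢
  constructor <;> linarith [le_abs_self A, neg_abs_le A]

lemma measureReal_compl_clBox_le (hM : M ≠ ⊤) (hν : ν ≤ M • volume)
    (hνc : ν (cubeIcc D) = 1) {γ : ℝ} (hγ : 0 ≤ γ) :
    ν.real (clBox (fun _ => 0) (fun _ => 1 - γ))ᶜ ≤ M.toReal * (D * γ) := by
  have hcube : ν.real (cubeIcc D)ᶜ = 0 := by
    rw [probReal_compl_eq_one_sub measurableSet_cubeIcc,
      Measure.real, hνc, ENNReal.toReal_one, sub_self]
  have hshell :
      ν.real (cubeIcc D \ clBox (fun _ => 0) (fun _ => 1 - γ)) ≤ M.toReal * (D * γ) := by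
    refine measureReal_le_of_volume_le hM hν (by positivity) ?_
    rw [ENNReal.ofReal_mul (Nat.cast_nonneg D), ENNReal.ofReal_natCast]
    exact volume_clBox_diff_le (e := fun _ => 0) (f := fun _ => 1) (fun _ => by norm_num) γ
  calc ν.real (clBox (fun _ => 0) (fun _ => 1 - γ))ᶜ
      ≤ ν.real ((cubeIcc D)ᶜ ∪ (cubeIcc D \ clBox (fun _ => 0) (fun _ => 1 - γ))) :=
        measureReal_mono fun x hx => by by_cases h : x ∈ cubeIcc D <;> simp_all
    _ ≤ M.toReal * (D * γ) := (measureReal_union_le _ _).trans (by linarith)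

end FixedMeasures

section Convergence

variable {ι : Type*} {l : Filter ι} (μ : ι → Measure (Fin D → ℝ))
  [∀ i, IsProbabilityMeasure (μ i)] (ν : Measure (Fin D → ℝ)) [IsProbabilityMeasure ν]
  {M : ℝ≥0∞}

theorem tendstoUniformly_setIntegral_clBox (hM : M ≠ ⊤) (hν : ν ≤ M • volume)
    (hconv : Tendsto (fun i => extDist (μ i) ν) l (𝓝 0)) (g : (Fin D → ℝ) →ᵇ ℝ) :
    TendstoUniformly (fun i (p : GoodBox D) => ∫ x in clBox p.1.1 p.1.2, g x ∂μ i)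
      (fun p => ∫ x in clBox p.1.1 p.1.2, g x ∂ν) l := by
  refine Metric.tendstoUniformly_iff.2 fun ε hε => ?_
  obtain ⟨δ, hδ, hgδ⟩ := Metric.uniformContinuousOn_iff.1
    (isCompact_cubeIcc.uniformContinuousOn_of_continuous g.continuous.continuousOn) (ε / 4)
    (by positivity)
  obtain ⟨n, hn⟩ := exists_nat_one_div_lt hδ
  have hE : Tendsto (fun i => ((n + 1 : ℕ) : ℝ) ^ D * (‖g‖ * extDist (μ i) ν)) l (𝓝 0) := by
    simpa using (hconv.const_mul ‖g‖).const_mul (((n + 1 : ℕ) : ℝ) ^ D)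
  filter_upwards [hE.eventually (gt_mem_nhds (half_pos hε))] with i hi p
  have := abs_setIntegral_clBox_sub_le (μ i) ν g hM hν n.succ_pos (ε := ε / 4)
    (fun x hx y hy hxy => hgδ x hx y hy (hxy.trans (by exact_mod_cast hn))) p.2
  rw [dist_comm, Real.dist_eq]
  linarith

theorem tendsto_integral_of_tendsto_extDist (hM : M ≠ ⊤) (hν : ν ≤ M • volume)
    (hνc : ν (cubeIcc D) = 1) (hconv : Tendsto (fun i => extDist (μ i) ν) l (𝓝 0))
    (g : (Fin D → ℝ) →ᵇ ℝ) : Tendsto (fun i => ∫ x, g x ∂μ i) l (𝓝 (∫ x, g x ∂ν)) := by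
  refine Metric.tendsto_nhds.2 fun ε hε => ?_
  have htail : Tendsto (fun γ : ℝ => ‖g‖ * (M.toReal * (D * γ))) (𝓝[>] 0) (𝓝 0) := by
    have : Continuous fun γ : ℝ => ‖g‖ * (M.toReal * (D * γ)) := by fun_prop
    simpa using (this.tendsto 0).mono_left nhdsWithin_le_nhds
  obtain ⟨γ, hγ₀, hγ₁, hγ⟩ := (eventually_mem_nhdsWithin.and
    (((eventually_lt_nhds one_pos).filter_mono nhdsWithin_le_nhds).and
      (htail.eventually (gt_mem_nhds (by positivity : 0 < ε / 8))))).exists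
  have hab : IsGoodBox (fun _ : Fin D => (0 : ℝ)) (fun _ => 1 - γ) :=
    fun _ => ⟨le_rfl, by linarith [show γ < 1 from hγ₁],
      by linarith [show (0 : ℝ) < γ from hγ₀]⟩
  have hcompl := mul_le_mul_of_nonneg_left
    (measureReal_compl_clBox_le ν hM hν hνc (le_of_lt hγ₀)) (norm_nonneg g)
  have hE : Tendsto (fun i => ‖g‖ * extDist (μ i) ν) l (𝓝 0) := by
    simpa using hconv.const_mul ‖g‖
  filter_upwards [Metric.tendstoUniformly_iff.1 (tendstoUniformly_setIntegral_clBox μ ν hM hν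
      hconv g) (ε / 4) (by positivity), hE.eventually (gt_mem_nhds (by positivity : 0 < ε / 4))]
    with i hbox hEi
  have := abs_integral_sub_le_of_isGoodBox (μ i) ν g hab
  have hboxi := hbox ⟨(_, _), hab⟩
  rw [Real.dist_eq, abs_sub_comm] at hboxi
  rw [mul_add, mul_left_comm] at this
  rw [Real.dist_eq]
  linarith

end Convergence

end ReweightedExtreme

open ReweightedExtreme

theorem reweighted_extreme_consistency_general
    {D : ℕ}
    (ρseq : ℕ → Measure (Fin D → ℝ)) (ρ : Measure (Fin D → ℝ))
    [∀ N, IsProbabilityMeasure (ρseq N)] [IsProbabilityMeasure ρ]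
    (hseqc : ∀ N, ρseq N (cubeIcc D) = 1) (hρc : ρ (cubeIcc D) = 1)
    (hconv : Tendsto (fun N => extDist (ρseq N) ρ) atTop (nhds 0))
    (hdens : ∃ M : ℝ≥0∞, M ≠ ⊤ ∧ ρ ≤ M • volume)
    (G : (Fin D → ℝ) → ℝ)
    (hGcont : ContinuousOn G (cubeIcc D))
    (hGbd : ∃ b : ℝ, ∀ x ∈ cubeIcc D, |G x| ≤ b)
    (hGnn : ∀ x ∈ cubeIcc D, 0 ≤ G x)
    (hGpos : 0 < ∫ x, G x ∂ρ) :
    (∀ᶠ N in atTop, 0 < ∫ x, G x ∂(ρseq N)) ∧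
    Tendsto (fun N =>
        extDist
          ((ENNReal.ofReal (∫ x, G x ∂(ρseq N)))⁻¹ •
            (ρseq N).withDensity fun x => ENNReal.ofReal (G x))
          ((ENNReal.ofReal (∫ x, G x ∂ρ))⁻¹ •
            ρ.withDensity fun x => ENNReal.ofReal (G x)))
      atTop (nhds 0) := by
  obtain ⟨M, hM, hρM⟩ := hdens
  obtain ⟨b, hGb⟩ := hGbd
  obtain ⟨g, hg, hgG⟩ := exists_boundedContinuous_eqOn isCompact_cubeIcc.isClosed hGcont
    ((abs_nonneg _).trans (hGb 0 (mem_univ_pi.2 fun _ => ⟨le_rfl, zero_le_one⟩)))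
    fun x hx => ⟨hGnn x hx, (le_abs_self _).trans (hGb x hx)⟩
  -- Both measures live on the cube, where `G = g`.
  have hae (μ : Measure (Fin D → ℝ)) [IsProbabilityMeasure μ] (hμ : μ (cubeIcc D) = 1) :
      G =ᵐ[μ] g :=
    ae_eq_of_eqOn_of_measure_eq_one measurableSet_cubeIcc hμ hgG.symm
  have hdens (μ : Measure (Fin D → ℝ)) [IsProbabilityMeasure μ] (hμ : μ (cubeIcc D) = 1) :
      (μ.withDensity fun x => ENNReal.ofReal (G x)) = μ.withDensity fun x => ENNReal.ofReal (g x) :=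
    withDensity_congr_ae ((hae μ hμ).fun_comp ENNReal.ofReal)
  simp only [integral_congr_ae (hae _ (hseqc _)), integral_congr_ae (hae ρ hρc),
    hdens _ (hseqc _), hdens ρ hρc] at hGpos ⊢
  have hI := tendsto_integral_of_tendsto_extDist ρseq ρ hM hρM hρc hconv g
  refine ⟨hI.eventually (lt_mem_nhds hGpos), tendsto_extDist_of_tendstoUniformly ?_⟩
  convert tendstoUniformly_div_of_tendsto
    (tendstoUniformly_setIntegral_clBox ρseq ρ hM hρM hconv g) hI hGpos.ne'
    fun p => abs_setIntegral_le_norm ρ g _ using 2 with N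
  · ext p
    exact measureReal_inv_smul_withDensity _ (g.integrable (ρseq N)) (fun x => (hg x).1)
      (measurableSet_clBox _ _)
  · exact measureReal_inv_smul_withDensity _ (g.integrable ρ) (fun x => (hg x).1)
      (measurableSet_clBox _ _)

/-- the change-of-measure step in the proof of Proposition 1:
if `ρ^N → ρ` in extreme norm, `ρ` has a bounded density, and `G ≥ 0` is continuous and
bounded with `ρ(G) > 0`, then eventually `ρ^N(G) > 0` and the self-normalized reweighted
measures `ν^N(dx) = G(x) ρ^N(dx)/ρ^N(G)` converge in extreme norm to
`ν(dx) = G(x) ρ(dx)/ρ(G)`. -/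
theorem reweighted_extreme_consistency
    {D : ℕ} (hD : 1 ≤ D)
    (ρseq : ℕ → Measure (Fin D → ℝ)) (ρ : Measure (Fin D → ℝ))
    [∀ N, IsProbabilityMeasure (ρseq N)] [IsProbabilityMeasure ρ]
    (hseqc : ∀ N, ρseq N (cubeIcc D) = 1) (hρc : ρ (cubeIcc D) = 1)
    (hconv : Tendsto (fun N => extDist (ρseq N) ρ) atTop (nhds 0))
    (hdens : ∃ M : ℝ≥0∞, M ≠ ⊤ ∧ ρ ≤ M • volume)
    (G : (Fin D → ℝ) → ℝ)
    (hGcont : ContinuousOn G (cubeIcc D))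
    (hGbd : ∃ b : ℝ, ∀ x ∈ cubeIcc D, |G x| ≤ b)
    (hGnn : ∀ x ∈ cubeIcc D, 0 ≤ G x)
    (hGpos : 0 < ∫ x, G x ∂ρ) :
    (∀ᶠ N in atTop, 0 < ∫ x, G x ∂(ρseq N)) ∧
    Tendsto (fun N =>
        extDist
          ((ENNReal.ofReal (∫ x, G x ∂(ρseq N)))⁻¹ •
            (ρseq N).withDensity fun x => ENNReal.ofReal (G x))
          ((ENNReal.ofReal (∫ x, G x ∂ρ))⁻¹ •
            ρ.withDensity fun x => ENNReal.ofReal (G x)))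
      atTop (nhds 0) :=
  reweighted_extreme_consistency_general ρseq ρ hseqc hρc hconv hdens G hGcont hGbd hGnn hGpos
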